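/- Let θ > 0, m ≥ 1 an integer, and n₁, …, n_m ∈ ℕ. Let X₁, …, X_m be jointly independent positive random variables on a probability space such that P[X_i ≥ z] ≍ z^{-θ} (log z)^{n_i} as z → ∞ for each i. Then P[X₁ X₂ ⋯ X_m ≥ z] ≍ z^{-θ} (log z)^{n₁ + ⋯ + n_m + m - 1} as z → ∞. -/

import Mathlib

open MeasureTheory ProbabilityTheory Real

/-- `AsympAtTop f g` : there exist constants `0 < κ₁ ≤ κ₂ < ∞` and `z₀ > 0` such that
`κ₁ f(z) ≤ g(z) ≤ κ₂ f(z)` for all `z ≥ z₀`. -/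
def AsympAtTop (f g : ℝ → ℝ) : Prop :=
  ∃ κ₁ κ₂ z₀ : ℝ, 0 < κ₁ ∧ κ₁ ≤ κ₂ ∧ 0 < z₀ ∧
    ∀ z, z₀ ≤ z → κ₁ * f z ≤ g z ∧ g z ≤ κ₂ * f z

/-!
Taking logarithms turns the product into the sum of the independent variables `log Xᵢ`, whose
tails satisfy `P[log Xᵢ ≥ t] ≍ e^{-θt} t^{nᵢ}`; by induction it suffices to add two independent
variables `U`, `V` with exponents `a`, `b` and to show `P[U + V ≥ L] ≍ e^{-θL} L^{a+b+1}`.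

Upper bound: sort the event `U + V ≥ L` by the integer part `k ∈ [0, L)` of `U`. Each of these
`≈ L` pieces has probability at most `P[U ≥ k] P[V ≥ L - k - 1] ≲ e^{-θL} L^{a+b}`.

Lower bound: for a fixed window length `D` large enough, the upper bound at `u + D` is at most
half the lower bound at `u`, so `P[U ∈ [u, u + D)] ≳ e^{-θu} u^a`. The `≈ L / D` disjoint events
`U ∈ [u, u + D), V ≥ L - u` with `u` running through `[L/3, L/2]` in steps of `D` each have
probability `≳ e^{-θL} L^{a+b}`.
-/

open Filter Finset

theorem asympAtTop_iff_eventually {f g : ℝ → ℝ} :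
    AsympAtTop f g ↔ ∃ κ₁ κ₂ : ℝ, 0 < κ₁ ∧ κ₁ ≤ κ₂ ∧
      ∀ᶠ z in atTop, κ₁ * f z ≤ g z ∧ g z ≤ κ₂ * f z := by
  constructor
  · rintro ⟨κ₁, κ₂, z₀, h₁, h₁₂, -, h⟩
    exact ⟨κ₁, κ₂, h₁, h₁₂, eventually_atTop.2 ⟨z₀, h⟩⟩
  · rintro ⟨κ₁, κ₂, h₁, h₁₂, h⟩
    obtain ⟨z₀, hz₀⟩ := eventually_atTop.1 h
    exact ⟨κ₁, κ₂, max z₀ 1, h₁, h₁₂, by positivity, fun z hz => hz₀ z (le_of_max_le_left hz)⟩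

theorem asympAtTop_iff_exists_le_and_exists_ge {f g : ℝ → ℝ} (hf : ∀ᶠ z in atTop, 0 ≤ f z) :
    AsympAtTop f g ↔ (∃ κ > 0, ∀ᶠ z in atTop, κ * f z ≤ g z) ∧
      (∃ κ > 0, ∀ᶠ z in atTop, g z ≤ κ * f z) := by
  rw [asympAtTop_iff_eventually]
  constructor
  · rintro ⟨κ₁, κ₂, h₁, h₁₂, h⟩
    exact ⟨⟨κ₁, h₁, h.mono fun _ => And.left⟩,
      ⟨κ₂, h₁.trans_le h₁₂, h.mono fun _ => And.right⟩⟩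
  · rintro ⟨⟨κ₁, h₁, hlow⟩, ⟨κ₂, -, hup⟩⟩
    refine ⟨κ₁, max κ₁ κ₂, h₁, le_max_left _ _, ?_⟩
    filter_upwards [hf, hlow, hup] with z hfz hlz huz
    exact ⟨hlz, huz.trans (mul_le_mul_of_nonneg_right (le_max_right _ _) hfz)⟩

theorem asympAtTop_comp_exp_iff {f g : ℝ → ℝ} :
    AsympAtTop (fun t => f (exp t)) (fun t => g (exp t)) ↔ AsympAtTop f g := by
  rw [asympAtTop_iff_eventually, asympAtTop_iff_eventually]
  conv_rhs => rw [← Real.map_exp_atTop]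
  simp only [eventually_map]

theorem exists_forall_le_mul_exp_mul_max_pow {θ : ℝ} {n : ℕ} {F : ℝ → ℝ} (hθ : 0 ≤ θ)
    (hF : ∀ t, F t ≤ 1) (h : ∃ κ > 0, ∀ᶠ t in atTop, F t ≤ κ * (exp (-(θ * t)) * t ^ n)) :
    ∃ M > 0, ∀ t, F t ≤ M * (exp (-(θ * t)) * max t 1 ^ n) := by
  obtain ⟨κ, hκ, h⟩ := h
  obtain ⟨t₀, ht₀⟩ := eventually_atTop.1 (h.and (eventually_ge_atTop 0))
  refine ⟨max κ (exp (θ * t₀)), by positivity, fun t => ?_⟩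
  rcases le_total t₀ t with ht | ht
  · obtain ⟨hFt, ht_nonneg⟩ := ht₀ t ht
    calc F t ≤ κ * (exp (-(θ * t)) * t ^ n) := hFt
      _ ≤ max κ (exp (θ * t₀)) * (exp (-(θ * t)) * max t 1 ^ n) := by
        gcongr
        exacts [le_max_left _ _, le_max_left _ _]
  · calc F t ≤ exp (θ * t₀) * (exp (-(θ * t)) * 1) := by
          rw [mul_one, ← exp_add]
          exact (hF t).trans (one_le_exp (by nlinarith))
      _ ≤ max κ (exp (θ * t₀)) * (exp (-(θ * t)) * max t 1 ^ n) := by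
        gcongr
        exacts [le_max_right _ _, one_le_pow₀ (le_max_right _ _)]

theorem sum_range_floor_mul_le {θ M N L : ℝ} {a b : ℕ} {F G : ℝ → ℝ} (hM : 0 ≤ M)
    (hN : 0 ≤ N) (hF : ∀ t, F t ≤ M * (exp (-(θ * t)) * max t 1 ^ a)) (hG₀ : ∀ t, 0 ≤ G t)
    (hG : ∀ t, G t ≤ N * (exp (-(θ * t)) * max t 1 ^ b)) (hL : 1 ≤ L) :
    ∑ k ∈ range ⌊L⌋₊, F k * G (L - k - 1) ≤
      M * N * exp θ * (exp (-(θ * L)) * L ^ (a + b + 1)) := by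
  have hterm : ∀ k ∈ range ⌊L⌋₊,
      F k * G (L - k - 1) ≤ M * N * exp θ * (exp (-(θ * L)) * (L ^ a * L ^ b)) := by
    intro k hk
    have hkL : (k : ℝ) + 1 ≤ L := by
      have : ((k + 1 : ℕ) : ℝ) ≤ ⌊L⌋₊ := Nat.cast_le.2 (mem_range.1 hk)
      push_cast at this
      linarith [Nat.floor_le (by linarith : (0 : ℝ) ≤ L)]
    have hexp : exp (-(θ * k)) * exp (-(θ * (L - k - 1))) = exp θ * exp (-(θ * L)) := by
      rw [← exp_add, ← exp_add]
      ring_nf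
    calc F k * G (L - k - 1)
        ≤ (M * (exp (-(θ * k)) * max (k : ℝ) 1 ^ a)) *
            (N * (exp (-(θ * (L - k - 1))) * max (L - k - 1) 1 ^ b)) :=
          mul_le_mul (hF _) (hG _) (hG₀ _) (by positivity)
      _ = M * N * (exp θ * exp (-(θ * L))) *
            (max (k : ℝ) 1 ^ a * max (L - k - 1) 1 ^ b) := by
          rw [← hexp]
          ring
      _ ≤ M * N * (exp θ * exp (-(θ * L))) * (L ^ a * L ^ b) := by
          gcongr
          · exact max_le (by linarith) hL
          · exact max_le (by linarith [(Nat.cast_nonneg k : (0 : ℝ) ≤ k)]) hL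
      _ = M * N * exp θ * (exp (-(θ * L)) * (L ^ a * L ^ b)) := by ring
  calc ∑ k ∈ range ⌊L⌋₊, F k * G (L - k - 1)
      ≤ ⌊L⌋₊ * (M * N * exp θ * (exp (-(θ * L)) * (L ^ a * L ^ b))) := by
        simpa using sum_le_card_nsmul _ _ _ hterm
    _ ≤ L * (M * N * exp θ * (exp (-(θ * L)) * (L ^ a * L ^ b))) := by
        gcongr
        exact Nat.floor_le (by linarith)
    _ = M * N * exp θ * (exp (-(θ * L)) * L ^ (a + b + 1)) := by ring

theorem mul_exp_neg_mul_pow_le_mul {θ c d L u W G : ℝ} {a b : ℕ} (hc : 0 ≤ c) (hd : 0 ≤ d)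
    (hu₁ : L / 3 ≤ u) (hu₂ : u ≤ L / 2) (hW : c * (exp (-(θ * u)) * u ^ a) ≤ W)
    (hG : d * (exp (-(θ * (L - u))) * (L - u) ^ b) ≤ G) :
    c * d * (exp (-(θ * L)) * ((L / 3) ^ a * (L / 2) ^ b)) ≤ W * G := by
  have hu : 0 ≤ u := by linarith
  have hLu : L / 2 ≤ L - u := by linarith
  have hexp : exp (-(θ * L)) = exp (-(θ * u)) * exp (-(θ * (L - u))) := by
    rw [← exp_add]
    ring_nf
  calc c * d * (exp (-(θ * L)) * ((L / 3) ^ a * (L / 2) ^ b))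
      ≤ c * d * (exp (-(θ * L)) * (u ^ a * (L - u) ^ b)) := by
        have hpow : (L / 3) ^ a * (L / 2) ^ b ≤ u ^ a * (L - u) ^ b :=
          mul_le_mul (pow_le_pow_left₀ (by linarith) hu₁ a) (pow_le_pow_left₀ (by linarith) hLu b)
            (pow_nonneg (by linarith) _) (pow_nonneg hu _)
        exact mul_le_mul_of_nonneg_left (mul_le_mul_of_nonneg_left hpow (exp_pos _).le)
          (mul_nonneg hc hd)
    _ = (c * (exp (-(θ * u)) * u ^ a)) * (d * (exp (-(θ * (L - u))) * (L - u) ^ b)) := by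
        rw [hexp]
        ring
    _ ≤ W * G := by
        have hW₀ : 0 ≤ c * (exp (-(θ * u)) * u ^ a) :=
          mul_nonneg hc (mul_nonneg (exp_pos _).le (pow_nonneg hu _))
        have hG₀ : 0 ≤ d * (exp (-(θ * (L - u))) * (L - u) ^ b) :=
          mul_nonneg hd (mul_nonneg (exp_pos _).le (pow_nonneg (by linarith) _))
        exact mul_le_mul hW hG hG₀ (hW₀.trans hW)

theorem ProbabilityTheory.IndepFun.measureReal_inter_preimage_eq_mul {Ω α β : Type*}
    [MeasurableSpace Ω] [MeasurableSpace α] [MeasurableSpace β] {μ : Measure Ω}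
    {X : Ω → α} {Y : Ω → β} (h : IndepFun X Y μ) {s : Set α} {t : Set β}
    (hs : MeasurableSet s) (ht : MeasurableSet t) :
    μ.real (X ⁻¹' s ∩ Y ⁻¹' t) = μ.real (X ⁻¹' s) * μ.real (Y ⁻¹' t) := by
  simp only [measureReal_def, h.measure_inter_preimage_eq_mul s t hs ht, ENNReal.toReal_mul]

section

variable {Ω : Type*} [MeasurableSpace Ω] {μ : Measure Ω} {X Y : Ω → ℝ} {θ : ℝ}

theorem measureReal_le_add_le_sum_floor [IsFiniteMeasure μ] (hXY : IndepFun X Y μ) (L : ℝ) :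
    μ.real {ω | L ≤ X ω + Y ω} ≤ μ.real {ω | L ≤ Y ω} +
      ∑ k ∈ range ⌊L⌋₊, μ.real {ω | (k : ℝ) ≤ X ω} * μ.real {ω | L - k - 1 ≤ Y ω} +
      μ.real {ω | (⌊L⌋₊ : ℝ) ≤ X ω} := by
  have hcover : {ω | L ≤ X ω + Y ω} ⊆ {ω | L ≤ Y ω} ∪
      (⋃ k ∈ range ⌊L⌋₊, {ω | (k : ℝ) ≤ X ω} ∩ {ω | L - k - 1 ≤ Y ω}) ∪
      {ω | (⌊L⌋₊ : ℝ) ≤ X ω} := by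
    intro ω (hω : L ≤ X ω + Y ω)
    rcases lt_or_ge (X ω) 0 with hX0 | hX0
    · exact Or.inl (Or.inl (show L ≤ Y ω by linarith))
    rcases le_or_gt (⌊L⌋₊ : ℝ) (X ω) with hXL | hXL
    · exact Or.inr hXL
    refine Or.inl (Or.inr (Set.mem_biUnion (x := ⌊X ω⌋₊) ?_ ⟨Nat.floor_le hX0, ?_⟩))
    · exact mem_range.2 ((Nat.floor_lt hX0).2 hXL)
    · show L - ⌊X ω⌋₊ - 1 ≤ Y ω
      linarith [Nat.lt_floor_add_one (X ω)]
  calc μ.real {ω | L ≤ X ω + Y ω}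
      ≤ μ.real {ω | L ≤ Y ω} +
          μ.real (⋃ k ∈ range ⌊L⌋₊, {ω | (k : ℝ) ≤ X ω} ∩ {ω | L - k - 1 ≤ Y ω}) +
          μ.real {ω | (⌊L⌋₊ : ℝ) ≤ X ω} :=
        (measureReal_mono hcover).trans <| (measureReal_union_le _ _).trans <|
          add_le_add_left (measureReal_union_le _ _) _
    _ ≤ _ := by
      gcongr
      refine (measureReal_biUnion_finset_le _ _).trans (le_of_eq (sum_congr rfl fun k _ => ?_))
      exact hXY.measureReal_inter_preimage_eq_mul measurableSet_Ici measurableSet_Ici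

theorem exists_tail_add_le [IsProbabilityMeasure μ] (hθ : 0 ≤ θ) {a b : ℕ}
    (hXY : IndepFun X Y μ)
    (hX : ∃ κ > 0, ∀ᶠ t in atTop, μ.real {ω | t ≤ X ω} ≤ κ * (exp (-(θ * t)) * t ^ a))
    (hY : ∃ κ > 0, ∀ᶠ t in atTop, μ.real {ω | t ≤ Y ω} ≤ κ * (exp (-(θ * t)) * t ^ b)) :
    ∃ κ > 0, ∀ᶠ t in atTop,
      μ.real {ω | t ≤ X ω + Y ω} ≤ κ * (exp (-(θ * t)) * t ^ (a + b + 1)) := by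
  obtain ⟨M, hM, hMX⟩ :=
    exists_forall_le_mul_exp_mul_max_pow hθ (fun _ => measureReal_le_one) hX
  obtain ⟨N, hN, hNY⟩ :=
    exists_forall_le_mul_exp_mul_max_pow hθ (fun _ => measureReal_le_one) hY
  refine ⟨N + M * N * exp θ + M * exp θ, by positivity, ?_⟩
  filter_upwards [eventually_ge_atTop 1] with L hL
  have hpow {s : ℝ} (hs : s ≤ L) {n : ℕ} (hn : n ≤ a + b + 1) :
      max s 1 ^ n ≤ L ^ (a + b + 1) :=
    (pow_le_pow_left₀ (by positivity) (max_le hs hL) n).trans (pow_le_pow_right₀ hL hn)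
  have hY_term : μ.real {ω | L ≤ Y ω} ≤ N * (exp (-(θ * L)) * L ^ (a + b + 1)) := by
    refine (hNY L).trans ?_
    gcongr
    exact hpow le_rfl (by omega)
  have hX_term : μ.real {ω | (⌊L⌋₊ : ℝ) ≤ X ω} ≤
      M * exp θ * (exp (-(θ * L)) * L ^ (a + b + 1)) := by
    refine (hMX _).trans ?_
    calc M * (exp (-(θ * ⌊L⌋₊)) * max (⌊L⌋₊ : ℝ) 1 ^ a)
        ≤ M * (exp (θ - θ * L) * L ^ (a + b + 1)) := by
          gcongr
          · nlinarith [Nat.sub_one_lt_floor L]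
          · exact hpow (Nat.floor_le (by linarith)) (by omega)
      _ = M * exp θ * (exp (-(θ * L)) * L ^ (a + b + 1)) := by
          rw [sub_eq_add_neg, exp_add]
          ring
  have hsum_term := sum_range_floor_mul_le (F := fun t => μ.real {ω | t ≤ X ω})
    (G := fun t => μ.real {ω | t ≤ Y ω}) hM.le hN.le hMX (fun _ => measureReal_nonneg) hNY hL
  calc μ.real {ω | L ≤ X ω + Y ω} ≤ _ := measureReal_le_add_le_sum_floor hXY L
    _ ≤ _ := add_le_add (add_le_add hY_term hsum_term) hX_term
    _ = _ := by ring

theorem exists_le_measureReal_preimage_Ico (hθ : 0 < θ) {a : ℕ}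
    (hX : (∃ κ > 0, ∀ᶠ t in atTop, κ * (exp (-(θ * t)) * t ^ a) ≤ μ.real {ω | t ≤ X ω}) ∧
      ∃ κ > 0, ∀ᶠ t in atTop, μ.real {ω | t ≤ X ω} ≤ κ * (exp (-(θ * t)) * t ^ a)) :
    ∃ D > 0, ∃ κ > 0, ∀ᶠ u in atTop,
      κ * (exp (-(θ * u)) * u ^ a) ≤ μ.real (X ⁻¹' Set.Ico u (u + D)) := by
  obtain ⟨⟨c₁, hc₁, hlow⟩, ⟨c₂, hc₂, hup⟩⟩ := hX
  have hsmall : ∀ᶠ D in atTop, c₂ * 2 ^ a * exp (-(θ * D)) < c₁ / 2 := by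
    have h := (tendsto_exp_neg_atTop_nhds_zero.comp
      (tendsto_id.const_mul_atTop hθ)).const_mul (c₂ * 2 ^ a)
    rw [mul_zero] at h
    exact h.eventually (gt_mem_nhds (by positivity))
  obtain ⟨D, hD, hDpos⟩ := (hsmall.and (eventually_gt_atTop 0)).exists
  refine ⟨D, hDpos, c₁ / 2, by positivity, ?_⟩
  filter_upwards [hlow, (tendsto_atTop_add_const_right _ D tendsto_id).eventually hup,
    eventually_ge_atTop D] with u hu huD hDu
  have hsplit : μ.real {ω | u ≤ X ω} ≤
      μ.real (X ⁻¹' Set.Ico u (u + D)) + μ.real {ω | u + D ≤ X ω} := by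
    change μ.real (X ⁻¹' Set.Ici u) ≤ _ + μ.real (X ⁻¹' Set.Ici (u + D))
    rw [← Set.Ico_union_Ici_eq_Ici (by linarith : u ≤ u + D), Set.preimage_union]
    exact measureReal_union_le _ _
  have htail : μ.real {ω | u + D ≤ X ω} ≤ c₁ / 2 * (exp (-(θ * u)) * u ^ a) := by
    calc μ.real {ω | u + D ≤ X ω} ≤ c₂ * (exp (-(θ * (u + D))) * (u + D) ^ a) := huD
      _ ≤ c₂ * (exp (-(θ * D)) * exp (-(θ * u)) * (2 * u) ^ a) := by
          rw [← exp_add, show -(θ * D) + -(θ * u) = -(θ * (u + D)) by ring]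
          gcongr
          all_goals linarith
      _ = c₂ * 2 ^ a * exp (-(θ * D)) * (exp (-(θ * u)) * u ^ a) := by ring
      _ ≤ c₁ / 2 * (exp (-(θ * u)) * u ^ a) := by
          gcongr
          have : 0 ≤ u := by linarith
          positivity
  linarith

theorem sum_measureReal_preimage_Ico_mul_le [IsFiniteMeasure μ] (hX : Measurable X)
    (hY : Measurable Y) (hXY : IndepFun X Y μ) (L s : ℝ) {D : ℝ} (N : ℕ) :
    ∑ j ∈ range N, μ.real (X ⁻¹' Set.Ico (s + j * D) (s + j * D + D)) *
        μ.real {ω | L - (s + j * D) ≤ Y ω} ≤ μ.real {ω | L ≤ X ω + Y ω} := by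
  set B : ℕ → Set Ω := fun j =>
    X ⁻¹' Set.Ico (s + j * D) (s + j * D + D) ∩ Y ⁻¹' Set.Ici (L - (s + j * D))
  have hIco : Pairwise
      (Function.onFun Disjoint fun j : ℕ => Set.Ico (s + j * D) (s + j * D + D)) := by
    intro i j hij
    simpa [Function.onFun, add_mul, add_assoc] using
      Set.pairwise_disjoint_Ico_add_zsmul s D (Nat.cast_injective.ne hij : (i : ℤ) ≠ j)
  have hdisj : Set.PairwiseDisjoint ↑(range N) B := fun i _ j _ hij =>
    ((hIco hij).preimage X).mono Set.inter_subset_left Set.inter_subset_left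
  calc ∑ j ∈ range N, μ.real (X ⁻¹' Set.Ico (s + j * D) (s + j * D + D)) *
        μ.real {ω | L - (s + j * D) ≤ Y ω}
      = μ.real (⋃ j ∈ range N, B j) := by
        rw [measureReal_biUnion_finset hdisj fun j _ =>
          (hX measurableSet_Ico).inter (hY measurableSet_Ici)]
        exact sum_congr rfl fun j _ =>
          (hXY.measureReal_inter_preimage_eq_mul measurableSet_Ico measurableSet_Ici).symm
    _ ≤ μ.real {ω | L ≤ X ω + Y ω} := by
        refine measureReal_mono (Set.iUnion₂_subset fun j _ ω ⟨hXω, hYω⟩ => ?_)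
        have hYω : L - (s + j * D) ≤ Y ω := hYω
        show L ≤ X ω + Y ω
        linarith [hXω.1]

theorem exists_le_tail_add [IsFiniteMeasure μ] (hθ : 0 < θ) {a b : ℕ} (hXm : Measurable X)
    (hYm : Measurable Y) (hXY : IndepFun X Y μ)
    (hX : (∃ κ > 0, ∀ᶠ t in atTop, κ * (exp (-(θ * t)) * t ^ a) ≤ μ.real {ω | t ≤ X ω}) ∧
      ∃ κ > 0, ∀ᶠ t in atTop, μ.real {ω | t ≤ X ω} ≤ κ * (exp (-(θ * t)) * t ^ a))
    (hY : ∃ κ > 0, ∀ᶠ t in atTop, κ * (exp (-(θ * t)) * t ^ b) ≤ μ.real {ω | t ≤ Y ω}) :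
    ∃ κ > 0, ∀ᶠ t in atTop,
      κ * (exp (-(θ * t)) * t ^ (a + b + 1)) ≤ μ.real {ω | t ≤ X ω + Y ω} := by
  obtain ⟨D, hD, c, hc, hwindow⟩ := exists_le_measureReal_preimage_Ico hθ hX
  obtain ⟨d, hd, hYlow⟩ := hY
  obtain ⟨u₀, hu₀⟩ := eventually_atTop.1 hwindow
  obtain ⟨t₀, ht₀⟩ := eventually_atTop.1 hYlow
  refine ⟨c * d / (12 * D * 3 ^ a * 2 ^ b), by positivity, ?_⟩
  filter_upwards [eventually_ge_atTop (3 * u₀), eventually_ge_atTop (2 * t₀),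
    eventually_ge_atTop (12 * D)] with L hLu₀ hLt₀ hLD
  set N := ⌊L / (6 * D)⌋₊
  have hL : 0 ≤ L := by linarith
  have hND : N * D ≤ L / 6 := by
    have := Nat.floor_le (a := L / (6 * D)) (by positivity)
    rw [le_div_iff₀ (by positivity)] at this
    linarith
  have hN : L / (12 * D) ≤ N := by
    have h2 : 2 ≤ L / (6 * D) := by rw [le_div_iff₀ (by positivity)]; linarith
    have := Nat.sub_one_lt_floor (L / (6 * D))
    have h3 : L / (12 * D) = L / (6 * D) / 2 := by field_simp; ring
    linarith
  have hblock : ∀ j ∈ range N, c * d * (exp (-(θ * L)) * ((L / 3) ^ a * (L / 2) ^ b)) ≤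
      μ.real (X ⁻¹' Set.Ico (L / 3 + j * D) (L / 3 + j * D + D)) *
        μ.real {ω | L - (L / 3 + j * D) ≤ Y ω} := by
    intro j hj
    have hjN : (j + 1 : ℝ) * D ≤ N * D := by
      gcongr
      exact_mod_cast mem_range.1 hj
    have hu : L / 3 ≤ L / 3 + j * D := le_add_of_nonneg_right (by positivity)
    exact mul_exp_neg_mul_pow_le_mul hc.le hd.le hu (by linarith)
      (hu₀ _ (by linarith)) (ht₀ _ (by linarith))
  calc c * d / (12 * D * 3 ^ a * 2 ^ b) * (exp (-(θ * L)) * L ^ (a + b + 1))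
      = L / (12 * D) * (c * d * (exp (-(θ * L)) * ((L / 3) ^ a * (L / 2) ^ b))) := by
        rw [div_pow, div_pow]; field_simp; ring
    _ ≤ N * (c * d * (exp (-(θ * L)) * ((L / 3) ^ a * (L / 2) ^ b))) := by gcongr
    _ ≤ _ := by simpa using card_nsmul_le_sum _ _ _ hblock
    _ ≤ _ := sum_measureReal_preimage_Ico_mul_le hXm hYm hXY L (L / 3) N

end

theorem exp_rpow_neg_mul_log_exp_pow (θ t : ℝ) (n : ℕ) :
    exp t ^ (-θ) * log (exp t) ^ n = exp (-(θ * t)) * t ^ n := by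
  rw [← exp_mul, log_exp, mul_comm t, neg_mul]

section

variable {Ω : Type*} [MeasurableSpace Ω] {μ : Measure Ω} {θ : ℝ}

theorem measureReal_exp_le_eq_of_ae_eq_exp {Y S : Ω → ℝ} (h : ∀ᵐ ω ∂μ, Y ω = exp (S ω))
    (t : ℝ) : μ.real {ω | exp t ≤ Y ω} = μ.real {ω | t ≤ S ω} := by
  refine measureReal_congr ?_
  filter_upwards [h] with ω hω
  change (exp t ≤ Y ω) = (t ≤ S ω)
  rw [hω, exp_le_exp]

theorem asympAtTop_tail_iff_of_ae_eq_exp {n : ℕ} {Y S : Ω → ℝ}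
    (h : ∀ᵐ ω ∂μ, Y ω = exp (S ω)) :
    AsympAtTop (fun z => z ^ (-θ) * log z ^ n) (fun z => μ.real {ω | z ≤ Y ω}) ↔
      AsympAtTop (fun t => exp (-(θ * t)) * t ^ n) (fun t => μ.real {ω | t ≤ S ω}) := by
  rw [← asympAtTop_comp_exp_iff]
  simp only [exp_rpow_neg_mul_log_exp_pow, measureReal_exp_le_eq_of_ae_eq_exp h]

theorem asympAtTop_tail_add [IsProbabilityMeasure μ] (hθ : 0 < θ) {a b : ℕ} {X Y : Ω → ℝ}
    (hXm : Measurable X) (hYm : Measurable Y) (hXY : IndepFun X Y μ)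
    (hX : AsympAtTop (fun t => exp (-(θ * t)) * t ^ a) (fun t => μ.real {ω | t ≤ X ω}))
    (hY : AsympAtTop (fun t => exp (-(θ * t)) * t ^ b) (fun t => μ.real {ω | t ≤ Y ω})) :
    AsympAtTop (fun t => exp (-(θ * t)) * t ^ (a + b + 1))
      (fun t => μ.real {ω | t ≤ X ω + Y ω}) := by
  have hprofile (n : ℕ) : ∀ᶠ t in atTop, 0 ≤ exp (-(θ * t)) * t ^ n :=
    (eventually_ge_atTop 0).mono fun t ht => by positivity
  rw [asympAtTop_iff_exists_le_and_exists_ge (hprofile a)] at hX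
  rw [asympAtTop_iff_exists_le_and_exists_ge (hprofile b)] at hY
  rw [asympAtTop_iff_exists_le_and_exists_ge (hprofile _)]
  exact ⟨exists_le_tail_add hθ hXm hYm hXY hX hY.1, exists_tail_add_le hθ.le hXY hX.2 hY.2⟩

theorem asympAtTop_tail_sum [IsProbabilityMeasure μ] {ι : Type*} (hθ : 0 < θ) {a : ι → ℕ}
    {X : ι → Ω → ℝ} (hXm : ∀ i, Measurable (X i)) (hX : iIndepFun X μ)
    (ht : ∀ i, AsympAtTop (fun t => exp (-(θ * t)) * t ^ a i)
      (fun t => μ.real {ω | t ≤ X i ω}))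
    {s : Finset ι} (hs : s.Nonempty) :
    AsympAtTop (fun t => exp (-(θ * t)) * t ^ (∑ i ∈ s, a i + #s - 1))
      (fun t => μ.real {ω | t ≤ ∑ i ∈ s, X i ω}) := by
  induction hs using Finset.Nonempty.cons_induction with
  | singleton j => simpa using ht j
  | cons j s hj hs ih =>
    have hindep : IndepFun (X j) (fun ω => ∑ i ∈ s, X i ω) μ := by
      simpa only [Finset.sum_fn] using (hX.indepFun_finsetSum_of_notMem hXm hj).symm
    have hexp : ∑ i ∈ cons j s hj, a i + #(cons j s hj) - 1 =
        a j + (∑ i ∈ s, a i + #s - 1) + 1 := by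
      rw [sum_cons, card_cons]
      have := hs.card_pos
      omega
    rw [hexp]
    simpa only [sum_cons] using
      asympAtTop_tail_add hθ (hXm j) (Finset.measurable_sum s fun i _ => hXm i) hindep (ht j) ih

end

theorem stmt_2 {Ω : Type*} [MeasureSpace Ω] [IsProbabilityMeasure (ℙ : Measure Ω)]
    (θ : ℝ) (hθ : 0 < θ) (m : ℕ) (hm : 1 ≤ m) (a : Fin m → ℕ)
    (X : Fin m → Ω → ℝ) (hXm : ∀ i, Measurable (X i))
    (hXpos : ∀ i, ∀ᵐ ω ∂ℙ, 0 < X i ω)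
    (hindep : iIndepFun X ℙ)
    (ht : ∀ i, AsympAtTop (fun z => z ^ (-θ) * Real.log z ^ (a i))
      (fun z => (ℙ {ω | z ≤ X i ω}).toReal)) :
    AsympAtTop (fun z => z ^ (-θ) * Real.log z ^ (∑ i, a i + m - 1))
      (fun z => (ℙ {ω | z ≤ ∏ i, X i ω}).toReal) := by
  have hX_exp : ∀ i, ∀ᵐ ω ∂ℙ, X i ω = exp (log (X i ω)) := fun i =>
    (hXpos i).mono fun ω hω => (exp_log hω).symm
  have hprod_exp : ∀ᵐ ω ∂ℙ, ∏ i, X i ω = exp (∑ i, log (X i ω)) := by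
    filter_upwards [ae_all_iff.2 hX_exp] with ω hω
    rw [exp_sum]
    exact prod_congr rfl fun i _ => hω i
  have hlog := asympAtTop_tail_sum hθ (fun i => (hXm i).log)
    (hindep.comp (fun _ => log) fun _ => measurable_log)
    (fun i => (asympAtTop_tail_iff_of_ae_eq_exp (hX_exp i)).1 (ht i))
    (univ_nonempty_iff.2 ⟨⟨0, hm⟩⟩)
  rw [card_univ, Fintype.card_fin] at hlog
  exact (asympAtTop_tail_iff_of_ae_eq_exp hprod_exp).2 hlog
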